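/- If Q ⊆ ℝⁿ is quasiopen, then its border Q \ interior(Q) is a quasivariety; consequently Q = interior(Q) ∪ border(Q) is a decomposition into an open set and a quasivariety. -/

import Mathlib

open MeasureTheory Set

/-- `Z ⊆ ℝⁿ` is a quasivariety (w.r.t. the clone `Basic`): it is contained in a
countable union of zero sets of not-identically-zero basic functions. -/
def IsQuasivariety (Basic : ∀ n : ℕ, ((Fin n → ℝ) → ℝ) → Prop) (n : ℕ)
    (Z : Set (Fin n → ℝ)) : Prop :=
  ∃ S : Set ((Fin n → ℝ) → ℝ), S.Countable ∧ (∀ h ∈ S, Basic n h ∧ h ≠ 0) ∧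
    Z ⊆ ⋃ h ∈ S, h ⁻¹' {0}

/-- The clone `Basic` is admissible: every not-identically-zero basic function has
zero set of Lebesgue measure zero. -/
def Admissible (Basic : ∀ n : ℕ, ((Fin n → ℝ) → ℝ) → Prop) : Prop :=
  ∀ (n : ℕ) (h : (Fin n → ℝ) → ℝ), Basic n h → h ≠ 0 → volume (h ⁻¹' {0}) = 0

/-- Quasiopen sets of ℝⁿ: smallest class containing open sets and zero sets of basic
functions, closed under countable unions and binary intersections. -/
inductive QuasiOpen (Basic : ∀ n : ℕ, ((Fin n → ℝ) → ℝ) → Prop) :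
    ∀ n : ℕ, Set (Fin n → ℝ) → Prop
  | of_isOpen {n : ℕ} (U : Set (Fin n → ℝ)) : IsOpen U → QuasiOpen Basic n U
  | zeroSet {n : ℕ} (h : (Fin n → ℝ) → ℝ) : Basic n h → QuasiOpen Basic n (h ⁻¹' {0})
  | iUnion {n : ℕ} (Q : ℕ → Set (Fin n → ℝ)) :
      (∀ i, QuasiOpen Basic n (Q i)) → QuasiOpen Basic n (⋃ i, Q i)
  | inter {n : ℕ} (Q₁ Q₂ : Set (Fin n → ℝ)) :
      QuasiOpen Basic n Q₁ → QuasiOpen Basic n Q₂ → QuasiOpen Basic n (Q₁ ∩ Q₂)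

/-!
Induction on quasiopen sets. The border of an open set is empty, that of a zero set lies in
the zero set (or is empty when the function vanishes identically), the border of a countable
union lies in the union of the borders, and the border of `A ∩ B` lies in the union of the
borders of `A` and `B`. Quasivarieties are closed under subsets and countable unions.
-/

section BorderSubset

variable {X ι : Type*} [TopologicalSpace X]

theorem iUnion_diff_interior_subset (s : ι → Set X) :
    (⋃ i, s i) \ interior (⋃ i, s i) ⊆ ⋃ i, s i \ interior (s i) := by
  rintro x ⟨hx, hnx⟩
  obtain ⟨i, hi⟩ := mem_iUnion.1 hx
  exact mem_iUnion.2 ⟨i, hi, fun h => hnx (interior_mono (subset_iUnion s i) h)⟩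

theorem inter_diff_interior_subset (s t : Set X) :
    (s ∩ t) \ interior (s ∩ t) ⊆ (s \ interior s) ∪ (t \ interior t) := by
  rintro x ⟨⟨hs, ht⟩, hnx⟩
  by_cases his : x ∈ interior s
  · refine Or.inr ⟨ht, fun hit => hnx ?_⟩
    rw [interior_inter]
    exact ⟨his, hit⟩
  · exact Or.inl ⟨hs, his⟩

end BorderSubset

namespace IsQuasivariety

variable {Basic : ∀ n : ℕ, ((Fin n → ℝ) → ℝ) → Prop} {n : ℕ}

theorem mono {Z Z' : Set (Fin n → ℝ)} (h : IsQuasivariety Basic n Z) (hZ' : Z' ⊆ Z) :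
    IsQuasivariety Basic n Z' :=
  let ⟨S, hS, hbasic, hZ⟩ := h
  ⟨S, hS, hbasic, hZ'.trans hZ⟩

theorem empty : IsQuasivariety Basic n ∅ :=
  ⟨∅, countable_empty, by simp, empty_subset _⟩

theorem zeroSet {h : (Fin n → ℝ) → ℝ} (hb : Basic n h) (hh : h ≠ 0) :
    IsQuasivariety Basic n (h ⁻¹' {0}) :=
  ⟨{h}, countable_singleton h, by simpa using ⟨hb, hh⟩, by simp⟩

theorem iUnion {ι : Type*} [Countable ι] {Z : ι → Set (Fin n → ℝ)}
    (h : ∀ i, IsQuasivariety Basic n (Z i)) : IsQuasivariety Basic n (⋃ i, Z i) := by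
  choose S hS hbasic hZ using h
  refine ⟨⋃ i, S i, countable_iUnion hS, ?_, ?_⟩
  · simp only [mem_iUnion, forall_exists_index]
    exact fun f i hf => hbasic i f hf
  · rw [biUnion_iUnion]
    exact iUnion_mono fun i => hZ i

theorem union {Z₁ Z₂ : Set (Fin n → ℝ)} (h₁ : IsQuasivariety Basic n Z₁)
    (h₂ : IsQuasivariety Basic n Z₂) : IsQuasivariety Basic n (Z₁ ∪ Z₂) := by
  rw [union_eq_iUnion]
  exact iUnion (Bool.forall_bool.2 ⟨h₂, h₁⟩)

end IsQuasivariety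

theorem QuasiOpen.isQuasivariety_diff_interior
    {Basic : ∀ n : ℕ, ((Fin n → ℝ) → ℝ) → Prop} {n : ℕ} {Q : Set (Fin n → ℝ)}
    (hQ : QuasiOpen Basic n Q) : IsQuasivariety Basic n (Q \ interior Q) := by
  induction hQ with
  | of_isOpen U hU =>
    rw [hU.interior_eq, sdiff_self]
    exact .empty
  | zeroSet h hb =>
    by_cases hh : h = 0
    · subst hh
      have : (0 : (Fin n → ℝ) → ℝ) ⁻¹' {0} = univ := eq_univ_of_forall fun _ => rfl
      rw [this, interior_univ, sdiff_self]
      exact .empty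
    · exact (IsQuasivariety.zeroSet hb hh).mono sdiff_subset
  | iUnion Q _ ih => exact (IsQuasivariety.iUnion ih).mono (iUnion_diff_interior_subset Q)
  | inter Q₁ Q₂ _ _ ih₁ ih₂ => exact (ih₁.union ih₂).mono (inter_diff_interior_subset Q₁ Q₂)

theorem quasiopen_border_quasivariety_general (Basic : ∀ n : ℕ, ((Fin n → ℝ) → ℝ) → Prop)
    (n : ℕ) (Q : Set (Fin n → ℝ))
    (hQ : QuasiOpen Basic n Q) :
    IsQuasivariety Basic n (Q \ interior Q) ∧ Q = interior Q ∪ (Q \ interior Q) :=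
  ⟨hQ.isQuasivariety_diff_interior, (union_sdiff_cancel interior_subset).symm⟩

/-- the border of a quasiopen set is a quasivariety, giving the
decomposition `Q = interior Q ∪ border Q`. -/
theorem quasiopen_border_quasivariety (Basic : ∀ n : ℕ, ((Fin n → ℝ) → ℝ) → Prop)
    (hadm : Admissible Basic) (n : ℕ) (Q : Set (Fin n → ℝ))
    (hQ : QuasiOpen Basic n Q) :
    IsQuasivariety Basic n (Q \ interior Q) ∧ Q = interior Q ∪ (Q \ interior Q) :=
  quasiopen_border_quasivariety_general Basic n Q hQ
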